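/- If P is a Polish space that is also a vector space over ℚ (or over a field of size 2) in which all translations are homeomorphisms, then there exist two disjoint Bernstein sets R, S ⊆ P such that R ∪ S is linearly independent over the base field. -/

import Mathlib

/-!
Over a countable field the span of fewer than `𝔠` vectors has fewer than `𝔠` elements, whereas
every Cantor set has `𝔠` points and there are only `𝔠` Cantor sets. Listing the Cantor sets twice
in order type `𝔠`, transfinite recursion picks from each listed set a point outside the span of
the points picked before; these points are linearly independent. Putting the points picked at
the first listing of the Cantor sets in `R` and those of the second in `S` makes `R` and `S`
disjoint sets that both meet every Cantor set.
-/

/-- A Cantor set in a topological space: nonempty, compact, totally disconnected, perfect. -/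
def IsCantorSet {P : Type*} [TopologicalSpace P] (C : Set P) : Prop :=
  C.Nonempty ∧ IsCompact C ∧ IsTotallyDisconnected C ∧ Perfect C

/-- A Bernstein set: no Cantor set is contained in it or in its complement. -/
def IsBernstein {P : Type*} [TopologicalSpace P] (B : Set P) : Prop :=
  ∀ C : Set P, IsCantorSet C → ¬C ⊆ B ∧ ¬C ⊆ Bᶜ

open Cardinal Set Submodule TopologicalSpace

universe u

section LinearAlgebra

variable {K V : Type*} [DivisionRing K] [AddCommGroup V] [Module K V]

theorem Submodule.mk_span_le_max [Countable K] (s : Set V) : #(span K s) ≤ max ℵ₀ #s := by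
  have hcover : (span K s : Set V) ⊆ ⋃ l : List s, span K (range fun i => (l.get i : V)) := by
    intro x hx
    obtain ⟨n, c, g, rfl⟩ := mem_span_set'.mp hx
    refine mem_iUnion.2 ⟨List.ofFn g, sum_mem fun i _ => smul_mem _ _ (subset_span ?_)⟩
    exact ⟨Fin.cast (by simp) i, by simp⟩
  calc #(span K s) ≤ #(⋃ l : List s, (span K (range fun i => (l.get i : V)) : Set V)) :=
        mk_le_mk_of_subset hcover
    _ ≤ #(List s) * ⨆ l : List s, #(span K (range fun i => (l.get i : V))) := mk_iUnion_le _
    _ ≤ max ℵ₀ #s * ℵ₀ := mul_le_mul' (mk_list_le_max _) (ciSup_le' fun _ => mk_le_aleph0)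
    _ = max ℵ₀ #s := mul_aleph0_eq (le_max_left _ _)

theorem exists_mem_notMem_span [Countable K] {κ : Cardinal} (hκ : ℵ₀ < κ) {s C : Set V}
    (hs : #s < κ) (hC : κ ≤ #C) : ∃ x ∈ C, x ∉ span K s := by
  by_contra! hCs
  exact (hC.trans (mk_le_mk_of_subset hCs |>.trans (mk_span_le_max s))).not_gt (max_lt hκ hs)

theorem linearIndependent_of_notMem_span_image_Iio {J : Type*} [LinearOrder J] {f : J → V}
    (hf : ∀ j, f j ∉ span K (f '' Iio j)) : LinearIndependent K f := by
  classical
  refine linearIndependent_iff_finset_linearIndependent.2 fun s => ?_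
  induction s using Finset.induction_on_max with
  | empty => exact linearIndependent_empty_type
  | insert a s has ih =>
    change LinearIndepOn K f ↑(insert a s)
    rw [Finset.coe_insert]
    refine (linearIndepOn_insert fun ha => (has a ha).false).2 ⟨ih, fun hspan => hf a ?_⟩
    exact span_mono (image_mono fun j hj => has j hj) hspan

end LinearAlgebra

theorem exists_forall_image_Iio {J α : Type*} [Preorder J] [WellFoundedLT J]
    (Q : J → Set α → α → Prop) (hQ : ∀ j (g : Iio j → α), ∃ a, Q j (range g) a) :
    ∃ f : J → α, ∀ j, Q j (f '' Iio j) (f j) := by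
  let f : J → α := wellFounded_lt.fix fun j rec => (hQ j fun i => rec i i.2).choose
  refine ⟨f, fun j => ?_⟩
  rw [image_eq_range, show f j = _ from wellFounded_lt.fix_eq _ j]
  exact (hQ j _).choose_spec

section Selection

variable {K : Type*} {V J : Type u} [DivisionRing K] [Countable K] [AddCommGroup V] [Module K V]
  {κ : Cardinal.{u}} {C : J → Set V}

theorem exists_linearIndependent_forall_mem_of_mk_Iio_lt [LinearOrder J] [WellFoundedLT J]
    (hκ : ℵ₀ < κ) (hJ : ∀ j : J, #(Iio j) < κ) (hC : ∀ j, κ ≤ #(C j)) :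
    ∃ f : J → V, (∀ j, f j ∈ C j) ∧ LinearIndependent K f := by
  obtain ⟨f, hf⟩ := exists_forall_image_Iio (fun j s x => x ∈ C j ∧ x ∉ span K s)
    fun j g => (exists_mem_notMem_span hκ (mk_range_le.trans_lt (hJ j)) (hC j)).imp fun _ => id
  exact ⟨f, fun j => (hf j).1, linearIndependent_of_notMem_span_image_Iio fun j => (hf j).2⟩

theorem exists_linearIndependent_forall_mem (hκ : ℵ₀ < κ) (hJ : #J ≤ κ)
    (hC : ∀ j, κ ≤ #(C j)) : ∃ f : J → V, (∀ j, f j ∈ C j) ∧ LinearIndependent K f := by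
  obtain ⟨e⟩ : Nonempty (J ↪ κ.ord.ToType) := by rwa [← le_def, mk_toType, card_ord]
  let _ : LinearOrder J := LinearOrder.lift' e e.injective
  have _ : WellFoundedLT J := ⟨InvImage.wf e wellFounded_lt⟩
  refine exists_linearIndependent_forall_mem_of_mk_Iio_lt hκ (fun j => ?_) hC
  calc #(Iio j) = #(e '' Iio j) := (mk_image_eq e.injective).symm
    _ ≤ #(Iio (e j)) := mk_le_mk_of_subset (image_subset_iff.2 fun _ hi => hi)
    _ < κ := by simpa using mk_Iio_lt (e j)

end Selection

theorem Perfect.continuum_le_mk {X : Type*} [TopologicalSpace X] [IsCompletelyMetrizableSpace X]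
    {C : Set X} (hC : Perfect C) (hne : C.Nonempty) : 𝔠 ≤ #C := by
  let := upgradeIsCompletelyMetrizable X
  obtain ⟨f, hfC, -, hf⟩ := hC.exists_nat_bool_injection hne
  simpa using lift_mk_le_lift_mk_of_injective
    (f := fun x => (⟨f x, hfC (mem_range_self x)⟩ : C)) fun x y h => hf (congrArg Subtype.val h)

theorem mk_setOf_isClosed_le_continuum (X : Type*) [TopologicalSpace X]
    [SecondCountableTopology X] : #{C : Set X // IsClosed C} ≤ 𝔠 := by
  let B := countableBasis X
  have : Countable B := (countable_countableBasis X).to_subtype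
  have hrecover : ∀ U : Set X, IsOpen U → ⋃₀ (Subtype.val '' {b : B | ↑b ⊆ U}) = U := by
    intro U hU
    conv_rhs => rw [(isBasis_countableBasis X).open_eq_sUnion' hU]
    congr 1
    ext s
    simp [B, and_comm]
  have hinj : Function.Injective
      fun C : {C : Set X // IsClosed C} => {b : B | ↑b ⊆ (C : Set X)ᶜ} := by
    intro C D h
    refine Subtype.ext (compl_injective ?_)
    rw [← hrecover _ C.2.isOpen_compl, ← hrecover _ D.2.isOpen_compl]
    exact congrArg (fun T => ⋃₀ (Subtype.val '' T)) h
  calc #{C : Set X // IsClosed C} ≤ #(Set B) := mk_le_of_injective hinj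
    _ = 2 ^ #B := mk_set
    _ ≤ 2 ^ ℵ₀ := power_le_power_left two_ne_zero mk_le_aleph0
    _ = 𝔠 := two_power_aleph0

theorem IsBernstein.of_disjoint {X : Type*} [TopologicalSpace X] {R S : Set X}
    (hRS : Disjoint R S) (hR : ∀ C, IsCantorSet C → (C ∩ R).Nonempty)
    (hS : ∀ C, IsCantorSet C → (C ∩ S).Nonempty) : IsBernstein R := fun C hC =>
  ⟨fun hCR => let ⟨_, hxC, hxS⟩ := hS C hC; hRS.ne_of_mem (hCR hxC) hxS rfl,
   fun hCR => let ⟨_, hxC, hxR⟩ := hR C hC; hCR hxC hxR⟩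

theorem exists_disjoint_bernstein_sets_with_independent_union_general
    (P : Type*) [TopologicalSpace P] [PolishSpace P]
    (K : Type*) [Field K] [AddCommGroup P] [Module K P]
    (hK : Cardinal.mk K = 2 ∨ Nonempty (K ≃+* ℚ)) :
    ∃ R S : Set P, Disjoint R S ∧ IsBernstein R ∧ IsBernstein S ∧
      LinearIndependent K (Subtype.val : ↥(R ∪ S) → P) := by
  have : Countable K := by
    rcases hK with hK | ⟨⟨e⟩⟩
    · exact mk_le_aleph0_iff.mp (hK ▸ (natCast_lt_aleph0 (n := 2)).le)
    · exact Countable.of_equiv ℚ e.toEquiv.symm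
  let ι := {C : Set P // IsCantorSet C}
  have hι : #ι ≤ 𝔠 :=
    (mk_subtype_mono fun C hC => hC.2.1.isClosed).trans (mk_setOf_isClosed_le_continuum P)
  have hC : ∀ C : ι, 𝔠 ≤ #(C : Set P) := fun C => C.2.2.2.2.continuum_le_mk C.2.1
  obtain ⟨f, hfC, hf⟩ := exists_linearIndependent_forall_mem (K := K)
    (C := Sum.elim (Subtype.val : ι → Set P) Subtype.val) aleph0_lt_continuum
    (by rw [mk_sum, lift_id]; exact add_le_of_le aleph0_le_continuum hι hι)
    (Sum.forall.2 ⟨hC, hC⟩)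
  have hdisj : Disjoint (range (f ∘ Sum.inl)) (range (f ∘ Sum.inr)) :=
    disjoint_range_iff.2 fun _ _ h => Sum.inl_ne_inr (hf.injective h)
  have hinl : ∀ C, IsCantorSet C → (C ∩ range (f ∘ Sum.inl)).Nonempty :=
    fun C hC => ⟨_, hfC (.inl ⟨C, hC⟩), mem_range_self _⟩
  have hinr : ∀ C, IsCantorSet C → (C ∩ range (f ∘ Sum.inr)).Nonempty :=
    fun C hC => ⟨_, hfC (.inr ⟨C, hC⟩), mem_range_self _⟩
  refine ⟨_, _, hdisj, .of_disjoint hdisj hinl hinr, .of_disjoint hdisj.symm hinr hinl, ?_⟩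
  rw [← Set.Sum.elim_range, Sum.elim_comp_inl_inr]
  exact (linearIndepOn_id_range_iff hf.injective).2 hf

theorem exists_disjoint_bernstein_sets_with_independent_union
    (P : Type*) [TopologicalSpace P] [PolishSpace P]
    (K : Type*) [Field K] [AddCommGroup P] [Module K P]
    (hK : Cardinal.mk K = 2 ∨ Nonempty (K ≃+* ℚ))
    (htrans : ∀ t : P, Continuous fun x => t + x) :
    ∃ R S : Set P, Disjoint R S ∧ IsBernstein R ∧ IsBernstein S ∧
      LinearIndependent K (Subtype.val : ↥(R ∪ S) → P) :=
  exists_disjoint_bernstein_sets_with_independent_union_general P K hK
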